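/- arXiv:1911.04777 — 2 statements merged into one kernel-verified Lean document; each statement's English description precedes it below -/
import Mathlib

section
/- Let p ≡ −1 (mod 16) be a prime. Then there exists s in the field ℚ_p of p-adic numbers with s² = 2, and for any such s, both 2 + s and 2 − s are squares in ℚ_p; i.e., the elements 2 + √2 and 2 − √2 are squares in ℚ_p. -/
/-!
Let `ζ` be a primitive 16th root of unity over `𝔽_p`. Since `p ≡ -1 (mod 16)`,
Frobenius sends `ζ` to `ζ⁻¹`, so `x = ζ + ζ⁻¹` lies in `𝔽_p`; as `ζ⁸ = -1`,
`a = x² - 2 = ζ² + ζ⁻²` satisfies `a² = 2`, so `2 + a = x²` is a square mod `p`.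
Because `(2 + a)(2 - a) = a²`, `2 - a` is a square too, which covers both square
roots of `2`. Hensel's lemma lifts these nonzero squares from `𝔽_p` to `ℤ_p`, and
every square root of `2` in `ℚ_p` lies in `ℤ_p`.
-/

theorem add_inv_sq_sub_two_sq_eq_two {F : Type*} [Field F] {ζ : F} (hζ : ζ ^ 8 = -1) :
    ((ζ + ζ⁻¹) ^ 2 - 2) ^ 2 = 2 := by
  have hζ0 : ζ ≠ 0 := by rintro rfl; norm_num at hζ
  field_simp
  linear_combination hζ

theorem add_inv_pow_char_eq_self {F : Type*} [Field F] (p : ℕ) [Fact p.Prime] [CharP F p]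
    {ζ : F} (hζ : ζ ^ (p + 1) = 1) : (ζ + ζ⁻¹) ^ p = ζ + ζ⁻¹ := by
  have hζp : ζ ^ p = ζ⁻¹ := eq_inv_of_mul_eq_one_left (by rwa [← pow_succ])
  rw [add_pow_char, hζp, inv_pow, hζp, inv_inv, add_comm]

theorem isSquare_two_sub_of_isSquare_two_add {F : Type*} [Field F] {s : F} (hs : s ^ 2 = 2)
    (h : IsSquare (2 + s)) : IsSquare (2 - s) := by
  obtain ⟨t, ht⟩ := h
  refine ⟨s / t, ?_⟩
  rcases eq_or_ne t 0 with rfl | ht0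
  · rw [div_zero, mul_zero]
    linear_combination (3 - 2 * s) * ht + 2 * hs
  · field_simp
    linear_combination (s - 2) * ht - 2 * hs

theorem ZMod.two_ne_zero {p : ℕ} [Fact p.Prime] (hp : p ≠ 2) : (2 : ZMod p) ≠ 0 :=
  Ring.two_ne_zero (by rwa [ZMod.ringChar_zmod_n])

theorem ZMod.exists_sq_sub_two_sq_eq_two (p : ℕ) [Fact p.Prime] (hp : p % 16 = 15) :
    ∃ x : ZMod p, (x ^ 2 - 2) ^ 2 = 2 := by
  have hp2 : p ≠ 2 := by rintro rfl; norm_num at hp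
  have : NeZero ((16 : ℕ) : ZMod p) :=
    ⟨by simpa [show (16 : ZMod p) = 2 ^ 4 by norm_num]
      using pow_ne_zero 4 (ZMod.two_ne_zero hp2)⟩
  let F := CyclotomicField 16 (ZMod p)
  have hζ := IsCyclotomicExtension.zeta_spec 16 (ZMod p) F
  set ζ := IsCyclotomicExtension.zeta 16 (ZMod p) F
  have hζ8 : ζ ^ 8 = -1 :=
    (hζ.pow_of_dvd (by norm_num) (by norm_num : 8 ∣ 16)).eq_neg_one_of_two_right
  have : CharP F p := charP_of_injective_algebraMap (algebraMap (ZMod p) F).injective p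
  have hx : ζ + ζ⁻¹ ∈ (⊥ : Subfield F) := by
    rw [Subfield.mem_bot_iff_pow_eq_self F p]
    apply add_inv_pow_char_eq_self
    obtain ⟨k, hk⟩ : 16 ∣ p + 1 := by omega
    rw [hk, pow_mul, hζ.pow_eq_one, one_pow]
  rw [← fieldRange_castHom_eq_bot p] at hx
  obtain ⟨x, hx⟩ := hx
  refine ⟨x, (ZMod.castHom dvd_rfl F).injective ?_⟩
  rw [map_pow, map_sub, map_pow, hx, map_ofNat]
  exact add_inv_sq_sub_two_sq_eq_two hζ8

theorem ZMod.isSquare_two_add_of_sq_eq_two {p : ℕ} [Fact p.Prime] (hp : p % 16 = 15)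
    {b : ZMod p} (hb : b ^ 2 = 2) : IsSquare (2 + b) := by
  obtain ⟨x, hx⟩ := ZMod.exists_sq_sub_two_sq_eq_two p hp
  have hx' : IsSquare (2 + (x ^ 2 - 2)) := ⟨x, by ring⟩
  rcases sq_eq_sq_iff_eq_or_eq_neg.mp (hb.trans hx.symm) with rfl | rfl
  · exact hx'
  · rw [← sub_eq_add_neg]
    exact isSquare_two_sub_of_isSquare_two_add hx hx'

namespace PadicInt

variable {p : ℕ} [Fact p.Prime]

theorem toZMod_eq_zero_iff_norm_lt_one {x : ℤ_[p]} : toZMod x = 0 ↔ ‖x‖ < 1 := by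
  rw [← RingHom.mem_ker, ker_toZMod, IsLocalRing.mem_maximalIdeal, mem_nonunits]

theorem norm_eq_one_of_toZMod_ne_zero {x : ℤ_[p]} (hx : toZMod x ≠ 0) : ‖x‖ = 1 :=
  (norm_le_one x).antisymm (not_lt.mp (toZMod_eq_zero_iff_norm_lt_one.not.mp hx))

open Polynomial in
theorem isSquare_of_isSquare_toZMod (hp : p ≠ 2) {c : ℤ_[p]} (hc : toZMod c ≠ 0)
    (h : IsSquare (toZMod c)) : IsSquare c := by
  obtain ⟨b, hb⟩ := h.exists_sq
  obtain ⟨a, rfl⟩ : ∃ a : ℤ_[p], toZMod a = b := ⟨(b.val : ℤ_[p]), by simp⟩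
  have hroot : ‖aeval a (X ^ 2 - C c)‖ < 1 := by
    rw [← toZMod_eq_zero_iff_norm_lt_one]
    simp [hb]
  have hderiv : ‖aeval a (derivative (X ^ 2 - C c))‖ = 1 := by
    have hb0 : toZMod a ≠ 0 := by rintro h0; simp [h0] at hb; exact hc hb
    have : aeval a (derivative (X ^ 2 - C c)) = 2 * a := by simp [one_add_one_eq_two]
    rw [this]
    apply norm_eq_one_of_toZMod_ne_zero
    rw [map_mul, map_ofNat]
    exact mul_ne_zero (ZMod.two_ne_zero hp) hb0
  obtain ⟨z, hz, -⟩ := hensels_lemma (F := X ^ 2 - C c) (a := a) (by rwa [hderiv, one_pow])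
  exact ⟨z, by simpa [sub_eq_zero, sq, eq_comm] using hz⟩

end PadicInt

namespace Padic

variable {p : ℕ} [Fact p.Prime]

theorem isSquare_two (hp : p % 8 = 1 ∨ p % 8 = 7) : IsSquare (2 : ℚ_[p]) := by
  have hp2 : p ≠ 2 := by rintro rfl; norm_num at hp
  have h2 : IsSquare (2 : ℤ_[p]) := by
    refine PadicInt.isSquare_of_isSquare_toZMod hp2 ?_ ?_ <;> rw [map_ofNat]
    · exact ZMod.two_ne_zero hp2
    · exact (ZMod.exists_sq_eq_two_iff hp2).mpr hp
  exact h2.map PadicInt.Coe.ringHom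

theorem isSquare_two_add_of_sq_eq_two (hp : p % 16 = 15) {s : ℚ_[p]} (hs : s ^ 2 = 2) :
    IsSquare (2 + s) := by
  have hp2 : p ≠ 2 := by rintro rfl; norm_num at hp
  have hs1 : ‖s‖ ≤ 1 := by
    have : ‖s‖ ^ 2 ≤ 1 := by
      rw [← norm_pow, hs]
      exact PadicInt.norm_le_one 2
    exact (pow_le_one_iff_of_nonneg (norm_nonneg s) two_ne_zero).mp this
  set z : ℤ_[p] := ⟨s, hs1⟩
  have hz : PadicInt.toZMod z ^ 2 = 2 := by
    have : z ^ 2 = 2 := Subtype.ext hs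
    rw [← map_pow, this, map_ofNat]
  have hz0 : PadicInt.toZMod (2 + z) ≠ 0 := by
    rw [map_add, map_ofNat]
    intro h
    exact ZMod.two_ne_zero hp2 (by linear_combination (2 - PadicInt.toZMod z) * h + hz)
  have h2z : IsSquare (2 + z) := PadicInt.isSquare_of_isSquare_toZMod hp2 hz0
    (by rw [map_add, map_ofNat]; exact ZMod.isSquare_two_add_of_sq_eq_two hp hz)
  exact h2z.map PadicInt.Coe.ringHom

end Padic

/-- For a prime `p ≡ -1 (mod 16)`, there is `s ∈ ℚ_p` with `s² = 2`,
and for any such `s` both `2 + s` and `2 - s` are squares in `ℚ_p`; i.e. the elements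
`2 ± √2` are squares in `ℚ_p`. -/
theorem two_add_sqrt_two_is_square_in_Qp
    (p : ℕ) [hp : Fact p.Prime] (hmod : p % 16 = 15) :
    (∃ s : ℚ_[p], s ^ 2 = 2) ∧
      ∀ s : ℚ_[p], s ^ 2 = 2 →
        (∃ t : ℚ_[p], t ^ 2 = 2 + s) ∧ (∃ t : ℚ_[p], t ^ 2 = 2 - s) := by
  refine ⟨?_, fun s hs => ⟨?_, ?_⟩⟩
  · obtain ⟨s, hs⟩ := (Padic.isSquare_two (p := p) (Or.inr (by omega))).exists_sq
    exact ⟨s, hs.symm⟩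
  · obtain ⟨t, ht⟩ := (Padic.isSquare_two_add_of_sq_eq_two hmod hs).exists_sq
    exact ⟨t, ht.symm⟩
  · have hs' : (-s) ^ 2 = 2 := by rwa [neg_sq]
    obtain ⟨t, ht⟩ := (Padic.isSquare_two_add_of_sq_eq_two hmod hs').exists_sq
    exact ⟨t, by rw [← ht, sub_eq_add_neg]⟩
end

section
/- Let p ≡ −1 (mod 8) be a prime, and let u, v, u', v' be positive integers with p = u² − 2v² = u'² − 2v'². Then the Jacobi symbols (2u/v) and (2u'/v') are equal. -/
private lemma unit_small (m k : ℤ) (h : m*m - 2*(k*k) = 1) (hk1 : -11 ≤ k) (hk2 : k ≤ 11) :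
    (m = 1 ∧ k = 0) ∨ (m = -1 ∧ k = 0) ∨ ((m = 3 ∨ m = -3) ∧ (k = 2 ∨ k = -2)) := by
  have h1 : m*m ≤ 243 := by nlinarith
  have h2 : -16 ≤ m := by nlinarith
  have h3 : m ≤ 16 := by nlinarith
  interval_cases m <;> interval_cases k <;> omega

private lemma sq_lt_sq'' (a b : ℕ) (h : a*a < b*b) : a < b := by
  by_contra hcon
  push_neg at hcon
  exact absurd (Nat.mul_le_mul hcon hcon) (by omega)

private lemma jac_step (u v : ℕ) (hu : u % 2 = 1) (hv : v % 2 = 1) :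
    jacobiSym ((2 * (3*u + 4*v) : ℕ)) (2*u + 3*v) = jacobiSym ((2*u : ℕ)) v := by
  have hbodd : (2*u + 3*v) % 2 = 1 := by omega
  have hbOdd : Odd (2*u + 3*v) := Nat.odd_iff.mpr hbodd
  have e1 : jacobiSym ((2*(3*u+4*v) : ℕ) : ℤ) (2*u+3*v) = jacobiSym (-(v:ℤ)) (2*u+3*v) := by
    apply jacobiSym.mod_left'
    have : ((2*(3*u+4*v) : ℕ) : ℤ) ≡ -(v:ℤ) [ZMOD ((2*u+3*v : ℕ) : ℤ)] := by
      apply Int.modEq_iff_dvd.mpr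
      exact ⟨-3, by push_cast; ring⟩
    exact this
  have e2 : jacobiSym (-(v:ℤ)) (2*u+3*v)
      = ZMod.χ₄ (((2*u+3*v : ℕ)) : ZMod 4) * jacobiSym ((v:ℕ) : ℤ) (2*u+3*v) :=
    jacobiSym.neg _ hbOdd
  have e4 : jacobiSym (((2*u+3*v : ℕ)) : ℤ) v = jacobiSym ((2*u : ℕ) : ℤ) v := by
    apply jacobiSym.mod_left'
    have : (((2*u+3*v : ℕ)) : ℤ) ≡ ((2*u : ℕ) : ℤ) [ZMOD ((v:ℕ) : ℤ)] := by
      apply Int.modEq_iff_dvd.mpr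
      exact ⟨-3, by push_cast; ring⟩
    exact this
  rcases Nat.odd_mod_four_iff.mp (by omega : v % 2 = 1) with h4 | h4
  · have hb4 : (2*u + 3*v) % 4 = 1 := by omega
    rw [e1, e2, ZMod.χ₄_nat_one_mod_four hb4,
      jacobiSym.quadratic_reciprocity_one_mod_four h4 hbOdd, e4, one_mul]
  · have hb4 : (2*u + 3*v) % 4 = 3 := by omega
    rw [e1, e2, ZMod.χ₄_nat_three_mod_four hb4,
      jacobiSym.quadratic_reciprocity_three_mod_four h4 hb4, e4]
    ring

private lemma jac_conj (u v a b : ℕ) (hu : u % 2 = 1) (hv : v % 2 = 1)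
    (ha : (a:ℤ) = 3*u - 4*v) (hb : (b:ℤ) = 2*u - 3*v) :
    jacobiSym ((2*a : ℕ)) b = jacobiSym ((2*u : ℕ)) v := by
  have hbodd : b % 2 = 1 := by omega
  have hbOdd : Odd b := Nat.odd_iff.mpr hbodd
  have e1 : jacobiSym ((2*a : ℕ) : ℤ) b = jacobiSym ((v:ℕ) : ℤ) b := by
    apply jacobiSym.mod_left'
    have : ((2*a : ℕ) : ℤ) ≡ ((v:ℕ) : ℤ) [ZMOD ((b:ℕ) : ℤ)] := by
      apply Int.modEq_iff_dvd.mpr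
      exact ⟨-3, by push_cast; linear_combination (-2:ℤ)*ha + 3*hb⟩
    exact this
  have e4 : jacobiSym (((b:ℕ)) : ℤ) v = jacobiSym ((2*u : ℕ) : ℤ) v := by
    apply jacobiSym.mod_left'
    have : (((b:ℕ)) : ℤ) ≡ ((2*u : ℕ) : ℤ) [ZMOD ((v:ℕ) : ℤ)] := by
      apply Int.modEq_iff_dvd.mpr
      exact ⟨3, by push_cast; linear_combination -hb⟩
    exact this
  rcases Nat.odd_mod_four_iff.mp hv with h4 | h4
  · have hb4 : b % 4 = 3 := by omega
    rw [e1, jacobiSym.quadratic_reciprocity_one_mod_four h4 hbOdd, e4]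
  · have hb4 : b % 4 = 1 := by omega
    rw [e1, jacobiSym.quadratic_reciprocity_one_mod_four' (Nat.odd_iff.mpr hv) hb4, e4]

private lemma sol_facts (p u v : ℕ) (hp : p.Prime) (hmod : p % 8 = 7) (hu : 0 < u) (hv : 0 < v)
    (h : (p:ℤ) = u^2 - 2*v^2) :
    u % 2 = 1 ∧ v % 2 = 1 ∧ v < u ∧ u*u = p + 2*(v*v) ∧ v*v ≠ 4*p := by
  have hZ : (u:ℤ)*u = (p:ℤ) + 2*((v:ℤ)*v) := by linear_combination -h
  have hN : u*u = p + 2*(v*v) := by exact_mod_cast hZ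
  have hp7 : 7 ≤ p := by omega
  have huo : u % 2 = 1 := by
    rcases Nat.even_or_odd u with ⟨a, rfl⟩ | ho
    · exfalso
      have : p % 2 = 0 := by
        have : (a+a)*(a+a) = 2*(2*(a*a)) := by ring
        omega
      omega
    · obtain ⟨a, rfl⟩ := ho; omega
  have hvo : v % 2 = 1 := by
    obtain ⟨a, ha⟩ : ∃ a, u = 2*a+1 := ⟨u/2, by omega⟩
    obtain ⟨c, hc⟩ : ∃ c, a*(a+1) = c + c := (Nat.even_mul_succ_self a)
    have h8 : u*u = 8*c + 1 := by subst ha; linear_combination 4*hc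
    rcases Nat.even_or_odd v with ⟨b, rfl⟩ | ho
    · exfalso
      obtain ⟨w, hw⟩ : ∃ w, w = b*b := ⟨_, rfl⟩
      have : (b+b)*(b+b) = 4*w := by rw [hw]; ring
      omega
    · obtain ⟨b, rfl⟩ := ho; omega
  have hvu : v < u := by
    apply sq_lt_sq''
    omega
  have hne : v*v ≠ 4*p := by
    intro hvv
    have hdvd : p ∣ v * v := ⟨4, by omega⟩
    have hpv : p ∣ v := ((Nat.Prime.dvd_mul hp).mp hdvd).elim id id
    obtain ⟨w, rfl⟩ := hpv
    have hpp : p * (p * (w*w)) = p * 4 := by linear_combination hvv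
    have : p * (w*w) = 4 := by
      have hp0 : 0 < p := hp.pos
      have := Nat.eq_of_mul_eq_mul_left hp0 hpp
      nlinarith
    have : p ≤ 4 := Nat.le_of_dvd (by norm_num) ⟨w*w, this.symm⟩
    omega
  exact ⟨huo, hvo, hvu, hN, hne⟩

private lemma jac_aux (p : ℕ) (hp : p.Prime) (hmod : p % 8 = 7) :
    ∀ n : ℕ, ∀ u v u' v' : ℕ, v + v' ≤ n → 0 < u → 0 < v → 0 < u' → 0 < v' →
      (p : ℤ) = u^2 - 2*v^2 → (p : ℤ) = u'^2 - 2*v'^2 →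
      jacobiSym ((2*u : ℕ)) v = jacobiSym ((2*u' : ℕ)) v' := by
  intro n
  induction n using Nat.strong_induction_on with
  | _ n IH =>
  intro u v u' v' hn hu hv hu' hv' h1 h2
  obtain ⟨huo, hvo, hvu, hN, hne⟩ := sol_facts p u v hp hmod hu hv h1
  obtain ⟨huo', hvo', hvu', hN', hne'⟩ := sol_facts p u' v' hp hmod hu' hv' h2
  have hp7 : 7 ≤ p := by omega
  by_cases hbig : 4*p < v*v
  · -- descend on (u, v)
    have h3u : 4*v < 3*u := by
      apply sq_lt_sq''
      have e1 : (4*v)*(4*v) = 16*(v*v) := by ring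
      have e2 : (3*u)*(3*u) = 9*(u*u) := by ring
      omega
    have h2u : 2*u < 3*v := by
      apply sq_lt_sq''
      have e1 : (2*u)*(2*u) = 4*(u*u) := by ring
      have e2 : (3*v)*(3*v) = 9*(v*v) := by ring
      omega
    have hu₁Z : ((3*u - 4*v : ℕ) : ℤ) = 3*(u:ℤ) - 4*v := by omega
    have hv₁Z : ((3*v - 2*u : ℕ) : ℤ) = 3*(v:ℤ) - 2*u := by omega
    have hsol : (p:ℤ) = ((3*u - 4*v : ℕ) : ℤ)^2 - 2*((3*v - 2*u : ℕ) : ℤ)^2 := by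
      rw [hu₁Z, hv₁Z]; linear_combination h1
    have hstep : jacobiSym ((2*u : ℕ)) v = jacobiSym ((2*(3*u - 4*v) : ℕ)) (3*v - 2*u) := by
      have hs := jac_step (3*u - 4*v) (3*v - 2*u) (by omega) (by omega)
      have e1 : 3*(3*u - 4*v) + 4*(3*v - 2*u) = u := by omega
      have e2 : 2*(3*u - 4*v) + 3*(3*v - 2*u) = v := by omega
      rw [e1, e2] at hs
      exact hs
    rw [hstep]
    exact IH ((3*v - 2*u) + v') (by omega) (3*u - 4*v) (3*v - 2*u) u' v' le_rfl
      (by omega) (by omega) hu' hv' hsol h2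
  by_cases hbig' : 4*p < v'*v'
  · -- descend on (u', v')
    have h3u : 4*v' < 3*u' := by
      apply sq_lt_sq''
      have e1 : (4*v')*(4*v') = 16*(v'*v') := by ring
      have e2 : (3*u')*(3*u') = 9*(u'*u') := by ring
      omega
    have h2u : 2*u' < 3*v' := by
      apply sq_lt_sq''
      have e1 : (2*u')*(2*u') = 4*(u'*u') := by ring
      have e2 : (3*v')*(3*v') = 9*(v'*v') := by ring
      omega
    have hu₁Z : ((3*u' - 4*v' : ℕ) : ℤ) = 3*(u':ℤ) - 4*v' := by omega
    have hv₁Z : ((3*v' - 2*u' : ℕ) : ℤ) = 3*(v':ℤ) - 2*u' := by omega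
    have hsol : (p:ℤ) = ((3*u' - 4*v' : ℕ) : ℤ)^2 - 2*((3*v' - 2*u' : ℕ) : ℤ)^2 := by
      rw [hu₁Z, hv₁Z]; linear_combination h2
    have hstep : jacobiSym ((2*u' : ℕ)) v' = jacobiSym ((2*(3*u' - 4*v') : ℕ)) (3*v' - 2*u') := by
      have hs := jac_step (3*u' - 4*v') (3*v' - 2*u') (by omega) (by omega)
      have e1 : 3*(3*u' - 4*v') + 4*(3*v' - 2*u') = u' := by omega
      have e2 : 2*(3*u' - 4*v') + 3*(3*v' - 2*u') = v' := by omega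
      rw [e1, e2] at hs
      exact hs
    rw [hstep]
    exact IH (v + (3*v' - 2*u')) (by omega) u v (3*u' - 4*v') (3*v' - 2*u') le_rfl
      hu hv (by omega) (by omega) h1 hsol
  · -- both reduced
    push_neg at hbig hbig'
    have hvlt : v*v < 4*p := lt_of_le_of_ne hbig hne
    have hvlt' : v'*v' < 4*p := lt_of_le_of_ne hbig' hne'
    have hult : u*u < 9*p := by omega
    have hult' : u'*u' < 9*p := by omega
    have huv' : u*v' < 6*p := by
      apply sq_lt_sq''
      have e1 : (u*v')*(u*v') = (u*u)*(v'*v') := by ring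
      have e2 : (6*p)*(6*p) = 36*(p*p) := by ring
      have e3 : (u*u)*(v'*v') < 36*(p*p) := by
        calc (u*u)*(v'*v') ≤ (u*u)*(4*p) := Nat.mul_le_mul_left _ (le_of_lt hvlt')
          _ < (9*p)*(4*p) := by
              have hp4 : 0 < 4*p := by omega
              exact (Nat.mul_lt_mul_right hp4).mpr hult
          _ = 36*(p*p) := by ring
      omega
    have hu'v : u'*v < 6*p := by
      apply sq_lt_sq''
      have e1 : (u'*v)*(u'*v) = (u'*u')*(v*v) := by ring
      have e2 : (6*p)*(6*p) = 36*(p*p) := by ring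
      have e3 : (u'*u')*(v*v) < 36*(p*p) := by
        calc (u'*u')*(v*v) ≤ (u'*u')*(4*p) := Nat.mul_le_mul_left _ (le_of_lt hvlt)
          _ < (9*p)*(4*p) := by
              have hp4 : 0 < 4*p := by omega
              exact (Nat.mul_lt_mul_right hp4).mpr hult'
          _ = 36*(p*p) := by ring
      omega
    have hpPos : (0:ℤ) < p := by exact_mod_cast hp.pos
    have hp0 : (p:ℤ) ≠ 0 := ne_of_gt hpPos
    have hZu : (0:ℤ) < u := by exact_mod_cast hu
    have hZv : (0:ℤ) < v := by exact_mod_cast hv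
    have hZu' : (0:ℤ) < u' := by exact_mod_cast hu'
    have hZv' : (0:ℤ) < v' := by exact_mod_cast hv'
    have hZuv' : (u:ℤ)*v' < 6*p := by exact_mod_cast huv'
    have hZu'v : (u':ℤ)*v < 6*p := by exact_mod_cast hu'v
    have hZvlt : (v:ℤ)*v < 4*p := by exact_mod_cast hvlt
    have hZvlt' : (v':ℤ)*v' < 4*p := by exact_mod_cast hvlt'
    have hZN : (u:ℤ)*u = (p:ℤ) + 2*((v:ℤ)*v) := by exact_mod_cast hN
    have hZN' : (u':ℤ)*u' = (p:ℤ) + 2*((v':ℤ)*v') := by exact_mod_cast hN'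
    have hpZ : Prime (p:ℤ) := Nat.prime_iff_prime_int.mp hp
    have hprod : ((u:ℤ)*v' - u'*v) * ((u:ℤ)*v' + u'*v) = (p:ℤ) * ((v':ℤ)*v' - v*v) := by
      linear_combination (-((v':ℤ))^2) * h1 + ((v:ℤ))^2 * h2
    rcases hpZ.dvd_mul.mp ⟨_, hprod⟩ with hA | hB
    · -- case A : p ∣ u v' - u' v
      obtain ⟨k, hk⟩ := hA
      have hA2 : ((u:ℤ)*u' - 2*((v:ℤ)*v'))^2 - 2*((u:ℤ)*v' - u'*v)^2 = (p:ℤ)^2 := by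
        linear_combination (-((u':ℤ)^2 - 2*(v':ℤ)^2)) * h1 - (p:ℤ) * h2
      have hm2 : ((u:ℤ)*u' - 2*((v:ℤ)*v'))^2 = (p:ℤ)^2 * (1 + 2*k^2) := by
        linear_combination hA2 + (2*((u:ℤ)*v' - u'*v + p*k)) * hk
      have hdvdm : (p:ℤ) ∣ ((u:ℤ)*u' - 2*((v:ℤ)*v')) := by
        apply hpZ.dvd_of_dvd_pow (n := 2)
        exact ⟨p * (1+2*k^2), by linear_combination hm2⟩
      obtain ⟨m, hm⟩ := hdvdm
      have hunit : m*m - 2*(k*k) = 1 := by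
        have hc : (p:ℤ)^2 * (m*m - 2*(k*k)) = (p:ℤ)^2 * 1 := by
          linear_combination hm2 - ((u:ℤ)*u' - 2*((v:ℤ)*v') + p*m) * hm
        exact mul_left_cancel₀ (pow_ne_zero 2 hp0) hc
      have hu'eq : (u':ℤ) = m*u + 2*(k*v) := by
        have hc : (p:ℤ) * u' = (p:ℤ) * (m*u + 2*(k*v)) := by
          linear_combination (u':ℤ) * h1 + (u:ℤ)*hm + 2*(v:ℤ)*hk
        exact mul_left_cancel₀ hp0 hc
      have hv'eq : (v':ℤ) = m*v + k*u := by
        have hc : (p:ℤ) * v' = (p:ℤ) * (m*v + k*u) := by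
          linear_combination (v':ℤ) * h1 + (v:ℤ)*hm + (u:ℤ)*hk
        exact mul_left_cancel₀ hp0 hc
      have hb1 : (p:ℤ)*k < 6*p := by
        rw [← hk]
        have := mul_pos hZu' hZv
        linarith
      have hb2 : -(6*(p:ℤ)) < p*k := by
        rw [← hk]
        have := mul_pos hZu hZv'
        linarith
      have hk1 : k ≤ 11 := by
        by_contra hcon
        push_neg at hcon
        have h12 : 12*(p:ℤ) ≤ k*p := mul_le_mul_of_nonneg_right (by omega) (le_of_lt hpPos)
        have hcm : k*(p:ℤ) = p*k := mul_comm _ _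
        linarith
      have hk2 : -11 ≤ k := by
        by_contra hcon
        push_neg at hcon
        have h12 : k*(p:ℤ) ≤ -12*p := mul_le_mul_of_nonneg_right (by omega) (le_of_lt hpPos)
        have hcm : k*(p:ℤ) = p*k := mul_comm _ _
        linarith
      rcases unit_small m k hunit hk2 hk1 with ⟨rfl, rfl⟩ | ⟨rfl, rfl⟩ | ⟨hm3, hk3⟩
      · have : u' = u ∧ v' = v := by constructor <;> omega
        rw [this.1, this.2]
      · exfalso; omega
      · exfalso
        rcases hm3 with rfl | rfl <;> rcases hk3 with rfl | rfl
        · -- m = 3, k = 2 : v' = 3v + 2u too big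
          have hkey : (v':ℤ)*v' = 4*p + 17*((v:ℤ)*v) + 12*((u:ℤ)*v) := by
            linear_combination ((v':ℤ) + 3*v + 2*u)*hv'eq + 4*hZN
          have := mul_pos hZu hZv
          have := mul_pos hZv hZv
          linarith
        · -- m = 3, k = -2 : 3v - 2u = v' > 0 forces v*v > 4p
          have h32 : 2*(u:ℤ) < 3*v := by linarith
          have hsq : (2*(u:ℤ))*(2*u) < (3*(v:ℤ))*(3*v) :=
            mul_lt_mul'' h32 h32 (by linarith) (by linarith)
          have e1 : (2*(u:ℤ))*(2*u) = 4*((u:ℤ)*u) := by ring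
          have e2 : (3*(v:ℤ))*(3*v) = 9*((v:ℤ)*v) := by ring
          linarith
        · -- m = -3, k = 2 : u' = -3u + 4v > 0 impossible
          have h34 : 3*(u:ℤ) < 4*v := by linarith
          have hsq : (3*(u:ℤ))*(3*u) < (4*(v:ℤ))*(4*v) :=
            mul_lt_mul'' h34 h34 (by linarith) (by linarith)
          have e1 : (3*(u:ℤ))*(3*u) = 9*((u:ℤ)*u) := by ring
          have e2 : (4*(v:ℤ))*(4*v) = 16*((v:ℤ)*v) := by ring
          linarith
        · -- m = -3, k = -2 : u' < 0
          linarith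
    · -- case B : p ∣ u v' + u' v
      obtain ⟨k, hk⟩ := hB
      have hA2 : ((u:ℤ)*u' + 2*((v:ℤ)*v'))^2 - 2*((u:ℤ)*v' + u'*v)^2 = (p:ℤ)^2 := by
        linear_combination (-((u':ℤ)^2 - 2*(v':ℤ)^2)) * h1 - (p:ℤ) * h2
      have hm2 : ((u:ℤ)*u' + 2*((v:ℤ)*v'))^2 = (p:ℤ)^2 * (1 + 2*k^2) := by
        linear_combination hA2 + (2*((u:ℤ)*v' + u'*v + p*k)) * hk
      have hdvdm : (p:ℤ) ∣ ((u:ℤ)*u' + 2*((v:ℤ)*v')) := by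
        apply hpZ.dvd_of_dvd_pow (n := 2)
        exact ⟨p * (1+2*k^2), by linear_combination hm2⟩
      obtain ⟨m, hm⟩ := hdvdm
      have hunit : m*m - 2*(k*k) = 1 := by
        have hc : (p:ℤ)^2 * (m*m - 2*(k*k)) = (p:ℤ)^2 * 1 := by
          linear_combination hm2 - ((u:ℤ)*u' + 2*((v:ℤ)*v') + p*m) * hm
        exact mul_left_cancel₀ (pow_ne_zero 2 hp0) hc
      have hu'eq : (u':ℤ) = m*u - 2*(k*v) := by
        have hc : (p:ℤ) * u' = (p:ℤ) * (m*u - 2*(k*v)) := by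
          linear_combination (u':ℤ) * h1 + (u:ℤ)*hm - 2*(v:ℤ)*hk
        exact mul_left_cancel₀ hp0 hc
      have hv'eq : (v':ℤ) = k*u - m*v := by
        have hc : (p:ℤ) * v' = (p:ℤ) * (k*u - m*v) := by
          linear_combination (v':ℤ) * h1 + (u:ℤ)*hk - (v:ℤ)*hm
        exact mul_left_cancel₀ hp0 hc
      have hb1 : (p:ℤ)*k < 12*p := by
        rw [← hk]
        linarith
      have hb2 : (0:ℤ) < p*k := by
        rw [← hk]
        have := mul_pos hZu hZv'
        have := mul_pos hZu' hZv
        linarith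
      have hk1 : k ≤ 11 := by
        by_contra hcon
        push_neg at hcon
        have h12 : 12*(p:ℤ) ≤ k*p := mul_le_mul_of_nonneg_right (by omega) (le_of_lt hpPos)
        have hcm : k*(p:ℤ) = p*k := mul_comm _ _
        linarith
      have hk0 : 1 ≤ k := by
        by_contra hcon
        push_neg at hcon
        have h0 : (p:ℤ)*k ≤ 0 := mul_nonpos_of_nonneg_of_nonpos (le_of_lt hpPos) (by omega)
        linarith
      rcases unit_small m k hunit (by omega) hk1 with ⟨rfl, rfl⟩ | ⟨rfl, rfl⟩ | ⟨hm3, hk3⟩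
      · exfalso; omega
      · exfalso; omega
      · rcases hk3 with rfl | rfl
        swap
        · exfalso; omega
        rcases hm3 with rfl | rfl
        swap
        · exfalso; linarith
        exact (jac_conj u v u' v' huo hvo (by linarith [hu'eq]) (by linarith [hv'eq])).symm

/-- For a prime `p ≡ -1 (mod 8)` and positive integers `u, v, u', v'`
with `p = u² - 2v² = u'² - 2v'²`, the Jacobi symbols `(2u/v)` and `(2u'/v')` coincide. -/
theorem jacobiSym_two_u_v_well_defined
    (p : ℕ) (hp : p.Prime) (hmod : p % 8 = 7)
    (u v u' v' : ℕ) (hu : 0 < u) (hv : 0 < v) (hu' : 0 < u') (hv' : 0 < v')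
    (h1 : (p : ℤ) = u ^ 2 - 2 * v ^ 2) (h2 : (p : ℤ) = u' ^ 2 - 2 * v' ^ 2) :
    jacobiSym (2 * u) v = jacobiSym (2 * u') v' := by
  have := jac_aux p hp hmod (v + v') u v u' v' le_rfl hu hv hu' hv' h1 h2
  push_cast at this ⊢
  exact this
end
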